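/- arXiv:math/0012194 — 5 statements merged into one kernel-verified Lean document; each statement's English description precedes it below -/
import Mathlib

section
/- Fix an integer k ≥ 1 and let G = (ZMod 2)^k with the symmetric group S_k acting by permuting coordinates. Let a, b, c ∈ G have exactly α₁, β₁, γ₁ coordinates equal to 1, respectively. Then the number M([a],[b],[c]) of S_k-orbits on T([a],[b],[c]) = {(x,y,z) ∈ [a]×[b]×[c] : x + y + z = 0} equals 1 if |α₁ − β₁| ≤ γ₁ ≤ α₁ + β₁, α₁ + β₁ + γ₁ ≤ 2k, and α₁ + β₁ + γ₁ is even; and M([a],[b],[c]) = 0 otherwise. -/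
/-- The orbit of `a` under the symmetric group `S_k` permuting the `k` coordinates. -/
def permOrbit {N k : ℕ} (a : Fin k → ZMod N) : Set (Fin k → ZMod N) :=
  {x | ∃ σ : Equiv.Perm (Fin k), x = fun i => a (σ i)}

/-- `T([a],[b],[c]) = {(x,y,z) ∈ [a]×[b]×[c] : x + y + z = 0}`. -/
def TripleSet (N k : ℕ) (a b c : Fin k → ZMod N) : Type :=
  {t : (Fin k → ZMod N) × (Fin k → ZMod N) × (Fin k → ZMod N) //
    t.1 ∈ permOrbit a ∧ t.2.1 ∈ permOrbit b ∧ t.2.2 ∈ permOrbit c ∧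
    t.1 + t.2.1 + t.2.2 = 0}

/-- `M([a],[b],[c])`: the number of orbits of the diagonal action of `S_k` on
`T([a],[b],[c])`, computed as the cardinality of the quotient by the orbit relation. -/
noncomputable def Morbits (N k : ℕ) (a b c : Fin k → ZMod N) : ℕ :=
  Nat.card (Quot fun t t' : TripleSet N k a b c =>
    ∃ σ : Equiv.Perm (Fin k),
      (∀ i, t'.1.1 i = t.1.1 (σ i)) ∧ (∀ i, t'.1.2.1 i = t.1.2.1 (σ i)) ∧
      (∀ i, t'.1.2.2 i = t.1.2.2 (σ i)))

/-- The number of coordinates of `a` equal to `j`. -/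
def cnt {N k : ℕ} (a : Fin k → ZMod N) (j : ZMod N) : ℕ :=
  (Finset.univ.filter fun i => a i = j).card



lemma zmod2_cases : ∀ u : ZMod 2, u = 0 ∨ u = 1 := by decide

lemma exists_perm_of_fiber_card_eq {k : ℕ} {β : Type*} [DecidableEq β]
    (f g : Fin k → β)
    (h : ∀ b, (Finset.univ.filter fun i => f i = b).card
            = (Finset.univ.filter fun i => g i = b).card) :
    ∃ σ : Equiv.Perm (Fin k), ∀ i, f i = g (σ i) := by
  have e : ∀ b, {i // f i = b} ≃ {i // g i = b} := fun b =>
    Fintype.equivOfCardEq (by simp only [Fintype.card_subtype]; exact h b)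
  refine ⟨(Equiv.sigmaFiberEquiv f).symm.trans
    ((Equiv.sigmaCongrRight fun b => e b).trans (Equiv.sigmaFiberEquiv g)), ?_⟩
  intro i
  exact ((e (f i)) ⟨i, rfl⟩).2.symm

lemma cnt_comp_perm {N k : ℕ} (a : Fin k → ZMod N) (σ : Equiv.Perm (Fin k)) (j : ZMod N) :
    cnt (fun i => a (σ i)) j = cnt a j := by
  unfold cnt
  exact Finset.card_equiv σ (by simp)
lemma cnt_zero_add_cnt_one {k : ℕ} (x : Fin k → ZMod 2) : cnt x 0 + cnt x 1 = k := by
  unfold cnt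
  have h : (Finset.univ.filter fun i => x i = 0) = (Finset.univ.filter fun i => ¬ (x i = 1)) := by
    apply Finset.filter_congr; intro i _
    rcases zmod2_cases (x i) with h | h <;> simp [h]
  rw [h, add_comm, Finset.card_filter_add_card_filter_not]
  simp

lemma mem_permOrbit_iff {k : ℕ} (a x : Fin k → ZMod 2) :
    x ∈ permOrbit a ↔ cnt x 1 = cnt a 1 := by
  constructor
  · rintro ⟨σ, rfl⟩; exact cnt_comp_perm a σ 1
  · intro h
    have h0 : cnt x 0 = cnt a 0 := by
      have := cnt_zero_add_cnt_one x
      have := cnt_zero_add_cnt_one a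
      omega
    obtain ⟨σ, hσ⟩ := exists_perm_of_fiber_card_eq x a (fun b => by
      rcases zmod2_cases b with hb | hb <;> subst hb
      · exact h0
      · exact h)
    exact ⟨σ, funext hσ⟩

/-- pair-count abbreviation -/
def pcnt {k : ℕ} (x y : Fin k → ZMod 2) (b : ZMod 2 × ZMod 2) : ℕ :=
  (Finset.univ.filter fun i => (x i, y i) = b).card

lemma pcnt_x {k : ℕ} (x y : Fin k → ZMod 2) :
    pcnt x y (1,1) + pcnt x y (1,0) = cnt x 1 := by
  unfold pcnt cnt
  rw [← Finset.card_union_of_disjoint (by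
    simp only [Finset.disjoint_filter]
    intro i _ h1 h2
    exact absurd (h1.symm.trans h2) (by decide))]
  congr 1
  ext i
  simp only [Finset.mem_union, Finset.mem_filter, Finset.mem_univ, true_and, Prod.mk.injEq]
  rcases zmod2_cases (y i) with h | h <;> simp [h]

lemma pcnt_y {k : ℕ} (x y : Fin k → ZMod 2) :
    pcnt x y (1,1) + pcnt x y (0,1) = cnt y 1 := by
  unfold pcnt cnt
  rw [← Finset.card_union_of_disjoint (by
    simp only [Finset.disjoint_filter]
    intro i _ h1 h2
    exact absurd (h1.symm.trans h2) (by decide))]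
  congr 1
  ext i
  simp only [Finset.mem_union, Finset.mem_filter, Finset.mem_univ, true_and, Prod.mk.injEq]
  rcases zmod2_cases (x i) with h | h <;> simp [h]

lemma pcnt_z {k : ℕ} (x y : Fin k → ZMod 2) :
    pcnt x y (1,0) + pcnt x y (0,1) = cnt (x + y) 1 := by
  unfold pcnt cnt
  rw [← Finset.card_union_of_disjoint (by
    simp only [Finset.disjoint_filter]
    intro i _ h1 h2
    exact absurd (h1.symm.trans h2) (by decide))]
  congr 1
  ext i
  simp only [Finset.mem_union, Finset.mem_filter, Finset.mem_univ, true_and, Prod.mk.injEq,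
    Pi.add_apply]
  have : ∀ u v : ZMod 2, (u = 1 ∧ v = 0 ∨ u = 0 ∧ v = 1) ↔ u + v = 1 := by decide
  exact this (x i) (y i)

lemma pcnt_total {k : ℕ} (x y : Fin k → ZMod 2) :
    pcnt x y (1,1) + pcnt x y (1,0) + pcnt x y (0,1) + pcnt x y (0,0) = k := by
  have h1 := pcnt_x x y
  have h2 : pcnt x y (0,1) + pcnt x y (0,0) = cnt x 0 := by
    unfold pcnt cnt
    rw [← Finset.card_union_of_disjoint (by
      simp only [Finset.disjoint_filter]
      intro i _ h1 h2
      exact absurd (h1.symm.trans h2) (by decide))]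
    congr 1
    ext i
    simp only [Finset.mem_union, Finset.mem_filter, Finset.mem_univ, true_and, Prod.mk.injEq]
    rcases zmod2_cases (y i) with h | h <;> simp [h]
  have h3 := cnt_zero_add_cnt_one x
  omega
lemma card_filter_Ico {k : ℕ} (s t : ℕ) (ht : t ≤ k) :
    (Finset.univ.filter fun i : Fin k => s ≤ i.val ∧ i.val < t).card = t - s := by
  have h : (Finset.univ.filter fun i : Fin k => s ≤ i.val ∧ i.val < t)
      = (Finset.Ico s t).attachFin (fun m hm => lt_of_lt_of_le (Finset.mem_Ico.1 hm).2 ht) := by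
    ext i
    simp [Finset.mem_attachFin, Finset.mem_Ico]
  rw [h, Finset.card_attachFin, Nat.card_Ico]

lemma exists_triple {k : ℕ} (α β γ : ℕ)
    (h1 : β ≤ α + γ) (h2 : α ≤ β + γ) (h3 : γ ≤ α + β)
    (h4 : α + β + γ ≤ 2 * k) (h5 : (α + β + γ) % 2 = 0) :
    ∃ x y : Fin k → ZMod 2, cnt x 1 = α ∧ cnt y 1 = β ∧ cnt (x + y) 1 = γ := by
  set p := (α + β - γ) / 2 with hp
  set q := (α + γ - β) / 2 with hq
  set r := (β + γ - α) / 2 with hr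
  have hpq : p + q = α := by omega
  have hpr : p + r = β := by omega
  have hqr : q + r = γ := by omega
  have hk : p + q + r ≤ k := by omega
  refine ⟨fun i => if i.val < p + q then 1 else 0,
    fun i => if i.val < p ∨ (p + q ≤ i.val ∧ i.val < p + q + r) then 1 else 0, ?_, ?_, ?_⟩
  · unfold cnt
    have : (Finset.univ.filter fun i : Fin k => (if i.val < p + q then (1:ZMod 2) else 0) = 1)
        = Finset.univ.filter fun i : Fin k => 0 ≤ i.val ∧ i.val < p + q := by
      apply Finset.filter_congr; intro i _
      by_cases h : i.val < p + q <;> simp [h]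
    rw [this, card_filter_Ico 0 (p+q) (by omega)]
    omega
  · unfold cnt
    rw [show (Finset.univ.filter fun i : Fin k =>
        (if i.val < p ∨ (p + q ≤ i.val ∧ i.val < p + q + r) then (1:ZMod 2) else 0) = 1)
      = (Finset.univ.filter fun i : Fin k => 0 ≤ i.val ∧ i.val < p)
        ∪ (Finset.univ.filter fun i : Fin k => p + q ≤ i.val ∧ i.val < p + q + r) from ?_]
    · rw [Finset.card_union_of_disjoint (by
        simp only [Finset.disjoint_filter]
        intro i _ hi hj
        omega)]
      rw [card_filter_Ico 0 p (by omega), card_filter_Ico (p+q) (p+q+r) (by omega)]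
      omega
    · ext i
      simp only [Finset.mem_union, Finset.mem_filter, Finset.mem_univ, true_and]
      by_cases h : i.val < p ∨ (p + q ≤ i.val ∧ i.val < p + q + r) <;> simp [h] <;> omega
  · unfold cnt
    rw [Finset.filter_congr (q := fun i : Fin k => p ≤ i.val ∧ i.val < p + q + r)
      (fun i _ => ?_), card_filter_Ico p (p+q+r) (by omega)]
    · omega
    · simp only [Pi.add_apply]
      by_cases hx : i.val < p + q <;>
        by_cases hy : i.val < p ∨ (p + q ≤ i.val ∧ i.val < p + q + r) <;>
          simp only [hx, hy, if_true, if_false, if_pos, if_neg, not_false_iff] <;>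
          · first
            | (rw [show (1:ZMod 2) + 1 = 0 by decide]; constructor
               · intro h; exact absurd h (by decide)
               · intro h; omega)
            | (rw [show (1:ZMod 2) + 0 = 1 by decide]; constructor
               · intro _; omega
               · intro _; rfl)
            | (rw [show (0:ZMod 2) + 1 = 1 by decide]; constructor
               · intro _; omega
               · intro _; rfl)
            | (rw [show (0:ZMod 2) + 0 = 0 by decide]; constructor
               · intro h; exact absurd h (by decide)
               · intro h; omega)
lemma zmod2_sum_eq (u v w : ZMod 2) (h : u + v + w = 0) : w = u + v := by revert u v w; decide

lemma triple_z_eq {k : ℕ} {a b c : Fin k → ZMod 2} (t : TripleSet 2 k a b c) :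
    t.1.2.2 = t.1.1 + t.1.2.1 := by
  funext i
  have := congrFun t.2.2.2.2 i
  simp only [Pi.add_apply, Pi.zero_apply] at this
  exact zmod2_sum_eq _ _ _ this

lemma triple_pcnt {k : ℕ} {a b c : Fin k → ZMod 2} (t : TripleSet 2 k a b c) :
    pcnt t.1.1 t.1.2.1 (1,1) + pcnt t.1.1 t.1.2.1 (1,0) = cnt a 1 ∧
    pcnt t.1.1 t.1.2.1 (1,1) + pcnt t.1.1 t.1.2.1 (0,1) = cnt b 1 ∧
    pcnt t.1.1 t.1.2.1 (1,0) + pcnt t.1.1 t.1.2.1 (0,1) = cnt c 1 ∧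
    pcnt t.1.1 t.1.2.1 (1,1) + pcnt t.1.1 t.1.2.1 (1,0) +
      pcnt t.1.1 t.1.2.1 (0,1) + pcnt t.1.1 t.1.2.1 (0,0) = k := by
  obtain ⟨v, hx, hy, hz, hs⟩ := t
  refine ⟨?_, ?_, ?_, pcnt_total _ _⟩
  · rw [pcnt_x]; exact (mem_permOrbit_iff a _).1 hx
  · rw [pcnt_y]; exact (mem_permOrbit_iff b _).1 hy
  · rw [pcnt_z, ← triple_z_eq ⟨v, hx, hy, hz, hs⟩]; exact (mem_permOrbit_iff c _).1 hz

lemma rel_of_triples {k : ℕ} (a b c : Fin k → ZMod 2) (t t' : TripleSet 2 k a b c) :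
    ∃ σ : Equiv.Perm (Fin k),
      (∀ i, t'.1.1 i = t.1.1 (σ i)) ∧ (∀ i, t'.1.2.1 i = t.1.2.1 (σ i)) ∧
      (∀ i, t'.1.2.2 i = t.1.2.2 (σ i)) := by
  obtain ⟨e1, e2, e3, e4⟩ := triple_pcnt t
  obtain ⟨f1, f2, f3, f4⟩ := triple_pcnt t'
  have hcnt : ∀ b : ZMod 2 × ZMod 2,
      pcnt t'.1.1 t'.1.2.1 b = pcnt t.1.1 t.1.2.1 b := by
    intro b
    rcases zmod2_cases b.1 with h1 | h1 <;> rcases zmod2_cases b.2 with h2 | h2 <;>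
      rw [show b = (b.1, b.2) from rfl, h1, h2] <;> omega
  obtain ⟨σ, hσ⟩ := exists_perm_of_fiber_card_eq
    (fun i => (t'.1.1 i, t'.1.2.1 i)) (fun i => (t.1.1 i, t.1.2.1 i)) hcnt
  have hσ' : ∀ i, t'.1.1 i = t.1.1 (σ i) ∧ t'.1.2.1 i = t.1.2.1 (σ i) := by
    intro i
    have h := hσ i
    rw [Prod.mk.injEq] at h
    exact h
  refine ⟨σ, fun i => (hσ' i).1, fun i => (hσ' i).2, fun i => ?_⟩
  rw [congrFun (triple_z_eq t') i, congrFun (triple_z_eq t) (σ i)]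
  simp only [Pi.add_apply, (hσ' i).1, (hσ' i).2]

lemma conds_of_triple {k : ℕ} {a b c : Fin k → ZMod 2} (t : TripleSet 2 k a b c) :
    cnt b 1 ≤ cnt a 1 + cnt c 1 ∧ cnt a 1 ≤ cnt b 1 + cnt c 1 ∧
    cnt c 1 ≤ cnt a 1 + cnt b 1 ∧ cnt a 1 + cnt b 1 + cnt c 1 ≤ 2 * k ∧
    (cnt a 1 + cnt b 1 + cnt c 1) % 2 = 0 := by
  obtain ⟨e1, e2, e3, e4⟩ := triple_pcnt t
  omega

theorem typeA_fusion_rank2_orbit_count (k : ℕ) (hk : 1 ≤ k)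
    (a b c : Fin k → ZMod 2) (α1 β1 γ1 : ℕ)
    (ha : cnt a 1 = α1) (hb : cnt b 1 = β1) (hc : cnt c 1 = γ1) :
    ((|(α1 : ℤ) - (β1 : ℤ)| ≤ (γ1 : ℤ) ∧ (γ1 : ℤ) ≤ (α1 : ℤ) + (β1 : ℤ) ∧
        α1 + β1 + γ1 ≤ 2 * k ∧ Even (α1 + β1 + γ1)) →
      Morbits 2 k a b c = 1) ∧
    (¬ (|(α1 : ℤ) - (β1 : ℤ)| ≤ (γ1 : ℤ) ∧ (γ1 : ℤ) ≤ (α1 : ℤ) + (β1 : ℤ) ∧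
        α1 + β1 + γ1 ≤ 2 * k ∧ Even (α1 + β1 + γ1)) →
      Morbits 2 k a b c = 0) := by
  subst ha hb hc
  constructor
  · rintro ⟨hab, hgl, hle, heven⟩
    rw [abs_sub_le_iff] at hab
    obtain ⟨x, y, hx1, hy1, hxy1⟩ := exists_triple (k := k) (cnt a 1) (cnt b 1) (cnt c 1)
      (by omega) (by omega) (by omega) hle (Nat.even_iff.mp heven)
    have hsum : x + y + (x + y) = 0 := by
      funext i
      simp only [Pi.add_apply, Pi.zero_apply]
      have : ∀ u v : ZMod 2, u + v + (u + v) = 0 := by decide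
      exact this (x i) (y i)
    have t0 : TripleSet 2 k a b c :=
      ⟨(x, y, x + y), (mem_permOrbit_iff a x).2 hx1, (mem_permOrbit_iff b y).2 hy1,
        (mem_permOrbit_iff c (x + y)).2 hxy1, hsum⟩
    unfold Morbits
    rw [Nat.card_eq_one_iff_unique]
    constructor
    · constructor
      intro u v
      induction u using Quot.ind with
      | _ t =>
        induction v using Quot.ind with
        | _ t' => exact Quot.sound (rel_of_triples a b c t t')
    · exact ⟨Quot.mk _ t0⟩
  · intro hneg
    unfold Morbits
    have he : IsEmpty (TripleSet 2 k a b c) := by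
      constructor
      intro t
      obtain ⟨c1, c2, c3, c4, c5⟩ := conds_of_triple t
      apply hneg
      refine ⟨?_, by omega, c4, Nat.even_iff.mpr c5⟩
      rw [abs_sub_le_iff]
      omega
    have : IsEmpty (Quot fun t t' : TripleSet 2 k a b c =>
        ∃ σ : Equiv.Perm (Fin k),
          (∀ i, t'.1.1 i = t.1.1 (σ i)) ∧ (∀ i, t'.1.2.1 i = t.1.2.1 (σ i)) ∧
          (∀ i, t'.1.2.2 i = t.1.2.2 (σ i))) := by
      constructor
      intro q
      induction q using Quot.ind with
      | _ t => exact he.false t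
    exact Nat.card_of_isEmpty
end

section
/- Fix an integer k ≥ 1 and let G = (ZMod 3)^k with S_k acting by permuting coordinates. Let a, b, c ∈ G be such that a has exactly α_j coordinates equal to j, b has exactly β_j, and c has exactly γ_j (j = 0,1,2), so α₀+α₁+α₂ = β₀+β₁+β₂ = γ₀+γ₁+γ₂ = k. Suppose 3 divides (α₀+β₀+γ₀) − (α₁+β₁+γ₁) and set A = ((α₀+β₀+γ₀) − (α₁+β₁+γ₁))/3, C = max(0, A − β₀ + γ₁, 2A + α₁ − β₀ + γ₁ − γ₀), D = max(−A, 0, A + α₁ − β₀ − β₂ + γ₁), E = min(A + α₁ − β₀ + γ₁, α₀ − A, γ₁). If E − C ≥ D, then M([a],[b],[c]) = (E − D − C + 1)(E − D − C + 2)/2 = binomial(E − D − C + 2, 2). If E − C < D, or if 3 does not divide (α₀+β₀+γ₀) − (α₁+β₁+γ₁), then M([a],[b],[c]) = 0. -/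
/-!
An `S_k`-orbit of triples `(x, y, z)` with `x + y + z = 0` is determined by the joint type of
`(x, y)`: the table `n (p, q)` counting the coordinates `i` with `(x i, y i) = (p, q)`. The tables
that occur are exactly those whose row sums, column sums and sums along the lines `p + q = -r`
are the value counts of `a`, `b` and `c`. For `N = 3` these nine equations have rank seven and
force `A = n (0, 0) - n (1, 1)`; solving them for `u = n (0, 2)` and `v = n (1, 1)` identifies the
tables with the lattice points of the triangle `C ≤ u`, `D ≤ v`, `u + v ≤ E`, of which there are
`(E - C - D + 2).choose 2`.
-/

open Finset

theorem ZMod.forall_three {P : ZMod 3 → Prop} : (∀ x, P x) ↔ P 0 ∧ P 1 ∧ P 2 :=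
  Fin.forall_fin_succ.trans <| and_congr_right' <| Fin.forall_fin_succ.trans <|
    and_congr_right' Fin.forall_fin_one

theorem ZMod.sum_three {M : Type*} [AddCommMonoid M] (f : ZMod 3 → M) :
    ∑ x, f x = f 0 + f 1 + f 2 :=
  Fin.sum_univ_three f

theorem Int.natCast_choose_two_toNat {m : ℤ} (hm : 0 ≤ m) :
    ((m.toNat.choose 2 : ℕ) : ℤ) = m * (m - 1) / 2 := by
  obtain ⟨j, rfl⟩ := Int.eq_ofNat_of_zero_le hm
  rcases j with _ | j
  · rfl
  · rw [Int.toNat_natCast, Nat.choose_two_right, Int.natCast_div, Nat.add_sub_cancel]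
    push_cast
    ring_nf

namespace PermOrbitCount

section FiberCard

variable {ι X Y : Type*} [Fintype ι]

def fiberCard [DecidableEq Y] (f : ι → Y) (y : Y) : ℕ := #{i | f i = y}

variable [DecidableEq Y]

theorem fiberCard_comp_perm (f : ι → Y) (σ : Equiv.Perm ι) : fiberCard (f ∘ σ) = fiberCard f :=
  funext fun _ => card_equiv σ (by simp)

theorem exists_perm_of_fiberCard_eq {f g : ι → Y} (h : fiberCard f = fiberCard g) :
    ∃ σ : Equiv.Perm ι, f = g ∘ σ := by
  have e : ∀ y, {i // f i = y} ≃ {i // g i = y} := fun y =>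
    Fintype.equivOfCardEq (by simpa [Fintype.card_subtype, fiberCard] using congrFun h y)
  exact ⟨Equiv.ofFiberEquiv e, funext fun i => (Equiv.ofFiberEquiv_map e i).symm⟩

theorem exists_perm_iff_fiberCard_eq {f g : ι → Y} :
    (∃ σ : Equiv.Perm ι, f = g ∘ σ) ↔ fiberCard f = fiberCard g :=
  ⟨by rintro ⟨σ, rfl⟩; exact fiberCard_comp_perm g σ, exists_perm_of_fiberCard_eq⟩

theorem sum_fiberCard [Fintype Y] (f : ι → Y) : ∑ y, fiberCard f y = Fintype.card ι :=
  (card_eq_sum_card_fiberwise (by simp)).symm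

theorem exists_fiberCard_eq [Fintype Y] (m : Y → ℕ) (h : ∑ y, m y = Fintype.card ι) :
    ∃ f : ι → Y, fiberCard f = m := by
  let e : (Σ y, Fin (m y)) ≃ ι := Fintype.equivOfCardEq (by simp [h])
  refine ⟨fun i => (e.symm i).1, funext fun y => ?_⟩
  rw [fiberCard, ← Fintype.card_subtype, ← Fintype.card_fin (m y)]
  exact Fintype.card_congr ((e.symm.subtypeEquiv fun _ => Iff.rfl).trans (Equiv.sigmaSubtype y))

theorem fiberCard_eq_sum_fiberCard_prod [Fintype X] [DecidableEq X] {Z : Type*} [DecidableEq Z]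
    (x : ι → X) (y : ι → Y) (g : ι → Z) (z : Z) (φ : X → Y)
    (h : ∀ i, g i = z ↔ y i = φ (x i)) :
    fiberCard g z = ∑ p, fiberCard (fun i => (x i, y i)) (p, φ p) := by
  rw [fiberCard, card_eq_sum_card_fiberwise (f := x) (t := univ) (by simp)]
  refine sum_congr rfl fun p _ => ?_
  rw [fiberCard, filter_filter]
  refine congrArg card (filter_congr fun i _ => ?_)
  rw [h, Prod.mk.injEq]
  constructor
  · rintro ⟨hy, rfl⟩; exact ⟨rfl, hy⟩
  · rintro ⟨rfl, hy⟩; exact ⟨hy, rfl⟩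

end FiberCard

-- `n (p, q)` counts the coordinates with `(x i, y i) = (p, q)`, hence `z i = -p - q`.
def HasMargins {G : Type*} [AddCommGroup G] [Fintype G] (α β γ : G → ℕ) (n : G × G → ℕ) :
    Prop :=
  (∀ p, ∑ q, n (p, q) = α p) ∧ (∀ q, ∑ p, n (p, q) = β q) ∧ ∀ r, ∑ p, n (p, -p - r) = γ r

theorem HasMargins.unique {G : Type*} [AddCommGroup G] [Fintype G] {α β γ α' β' γ' : G → ℕ}
    {n : G × G → ℕ} (h : HasMargins α β γ n) (h' : HasMargins α' β' γ' n) :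
    α = α' ∧ β = β' ∧ γ = γ' :=
  ⟨funext fun p => (h.1 p).symm.trans (h'.1 p), funext fun q => (h.2.1 q).symm.trans (h'.2.1 q),
    funext fun r => (h.2.2 r).symm.trans (h'.2.2 r)⟩

theorem hasMargins_fiberCard {ι G : Type*} [Fintype ι] [AddCommGroup G] [Fintype G]
    [DecidableEq G] (x y z : ι → G) (h : ∀ i, x i + y i + z i = 0) :
    HasMargins (fiberCard x) (fiberCard y) (fiberCard z) (fiberCard fun i => (x i, y i)) := by
  refine ⟨fun p => ?_, fun q => ?_, fun r => ?_⟩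
  · rw [fiberCard_eq_sum_fiberCard_prod y x x p (fun _ => p) (fun _ => Iff.rfl)]
    refine sum_congr rfl fun q _ => ?_
    exact card_equiv (Equiv.refl _) (by simp [and_comm])
  · exact (fiberCard_eq_sum_fiberCard_prod x y y q (fun _ => q) (fun _ => Iff.rfl)).symm
  · refine (fiberCard_eq_sum_fiberCard_prod x y z r (fun p => -p - r) fun i => ?_).symm
    have hz : z i = -x i - y i := by rw [← sub_eq_zero, ← h i]; abel
    rw [hz, sub_eq_iff_eq_add, eq_sub_iff_add_eq, add_comm r, eq_comm]

variable {N k : ℕ} {a b c : Fin k → ZMod N}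

theorem mem_permOrbit_iff {x : Fin k → ZMod N} : x ∈ permOrbit a ↔ cnt x = cnt a :=
  exists_perm_iff_fiberCard_eq

theorem tripleSet_third_eq_neg (t : TripleSet N k a b c) (i : Fin k) :
    t.1.2.2 i = -(t.1.1 i + t.1.2.1 i) :=
  eq_neg_of_add_eq_zero_right (by simpa using congrFun t.2.2.2.2 i)

def jointCount (t : TripleSet N k a b c) : ZMod N × ZMod N → ℕ :=
  fiberCard fun i => (t.1.1 i, t.1.2.1 i)

variable [NeZero N]

theorem hasMargins_jointCount (t : TripleSet N k a b c) :
    HasMargins (cnt a) (cnt b) (cnt c) (jointCount t) := by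
  obtain ⟨⟨x, y, z⟩, hx, hy, hz, hsum⟩ := t
  rw [mem_permOrbit_iff] at hx hy hz
  rw [← hx, ← hy, ← hz]
  exact hasMargins_fiberCard x y z fun i => by simpa using congrFun hsum i

theorem exists_jointCount_eq {n : ZMod N × ZMod N → ℕ}
    (hn : HasMargins (cnt a) (cnt b) (cnt c) n) :
    ∃ t : TripleSet N k a b c, jointCount t = n := by
  have hsum : ∑ w, n w = Fintype.card (Fin k) := by
    rw [Fintype.sum_prod_type, ← sum_fiberCard a]
    exact sum_congr rfl fun p _ => hn.1 p
  obtain ⟨F, hF⟩ := exists_fiberCard_eq n hsum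
  let x i := (F i).1
  let y i := (F i).2
  let z i := -(x i + y i)
  have hm := hasMargins_fiberCard x y z fun i => add_neg_cancel _
  change HasMargins _ _ _ (fiberCard F) at hm
  rw [hF] at hm
  obtain ⟨hx, hy, hz⟩ := hm.unique hn
  exact ⟨⟨(x, y, z), mem_permOrbit_iff.2 hx, mem_permOrbit_iff.2 hy, mem_permOrbit_iff.2 hz,
    funext fun i => add_neg_cancel _⟩, hF⟩

theorem Morbits_eq_card_hasMargins :
    Morbits N k a b c = Nat.card {n // HasMargins (cnt a) (cnt b) (cnt c) n} := by
  refine Nat.card_congr (Equiv.ofBijective (Quot.lift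
    (fun t => ⟨jointCount t, hasMargins_jointCount t⟩) ?_) ⟨?_, ?_⟩)
  · rintro t t' ⟨σ, hx, hy, -⟩
    have hσ : (fun i => (t'.1.1 i, t'.1.2.1 i)) = (fun i => (t.1.1 i, t.1.2.1 i)) ∘ σ :=
      funext fun i => by simp [hx, hy]
    exact Subtype.ext ((congrArg fiberCard hσ).trans (fiberCard_comp_perm _ σ)).symm
  · rintro ⟨t⟩ ⟨t'⟩ h
    obtain ⟨σ, hσ⟩ := exists_perm_of_fiberCard_eq (f := fun i => (t'.1.1 i, t'.1.2.1 i))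
      (congrArg Subtype.val h).symm
    have hx i : t'.1.1 i = t.1.1 (σ i) := congrArg Prod.fst (congrFun hσ i)
    have hy i : t'.1.2.1 i = t.1.2.1 (σ i) := congrArg Prod.snd (congrFun hσ i)
    refine Quot.sound ⟨σ, hx, hy, fun i => ?_⟩
    rw [tripleSet_third_eq_neg t, tripleSet_third_eq_neg t', hx, hy]
  · rintro ⟨n, hn⟩
    obtain ⟨t, ht⟩ := exists_jointCount_eq hn
    exact ⟨Quot.mk _ t, Subtype.ext ht⟩

def triangle (C D E : ℤ) : Set (ℤ × ℤ) := {p | C ≤ p.1 ∧ D ≤ p.2 ∧ p.1 + p.2 ≤ E}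

theorem card_filter_fst_add_snd_le (n : ℕ) :
    #{q ∈ range (n + 1) ×ˢ range (n + 1) | q.1 + q.2 ≤ n} = (n + 2).choose 2 := by
  rw [card_eq_sum_card_fiberwise (f := fun q => q.1 + q.2) (t := range (n + 1))
    (fun q hq => by simp at hq ⊢; omega)]
  rw [← Nat.sum_range_add_choose n 1]
  refine sum_congr rfl fun s hs => ?_
  rw [Nat.choose_one_right, ← Finset.Nat.card_antidiagonal s]
  congr 1
  ext q
  simp only [mem_filter, mem_product, mem_range, HasAntidiagonal.mem_antidiagonal]
  simp only [mem_range] at hs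
  omega

theorem card_triangle (C D E : ℤ) :
    Nat.card (triangle C D E) = (E - C - D + 2).toNat.choose 2 := by
  rcases lt_or_ge (E - C - D) 0 with h | h
  · rw [Nat.choose_eq_zero_of_lt (by omega)]
    have : IsEmpty (triangle C D E) := ⟨fun ⟨p, h1, h2, h3⟩ => by omega⟩
    exact Nat.card_of_isEmpty
  · obtain ⟨n, hn⟩ : ∃ n : ℕ, E - C - D = n := ⟨_, (Int.toNat_of_nonneg h).symm⟩
    rw [show (E - C - D + 2).toNat = n + 2 by omega, ← card_filter_fst_add_snd_le,
      ← Nat.card_eq_finsetCard]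
    refine Nat.card_congr
      { toFun p := ⟨((p.1.1 - C).toNat, (p.1.2 - D).toNat), ?_⟩
        invFun q := ⟨(C + q.1.1, D + q.1.2), ?_⟩
        left_inv p := ?_
        right_inv q := ?_ }
    · obtain ⟨p, h1, h2, h3⟩ := p
      simp only [mem_filter, mem_product, mem_range]
      omega
    · obtain ⟨q, hq⟩ := q
      simp only [mem_filter, mem_product, mem_range] at hq
      simp only [triangle, Set.mem_ofPred_eq]
      omega
    · obtain ⟨p, h1, h2, h3⟩ := p
      ext <;> simp <;> omega
    · ext <;> simp

theorem hasMargins_three_iff (α β γ : ZMod 3 → ℕ) (n : ZMod 3 × ZMod 3 → ℕ) :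
    HasMargins α β γ n ↔
      n (0, 0) + n (0, 1) + n (0, 2) = α 0 ∧ n (1, 0) + n (1, 1) + n (1, 2) = α 1 ∧
      n (2, 0) + n (2, 1) + n (2, 2) = α 2 ∧
      n (0, 0) + n (1, 0) + n (2, 0) = β 0 ∧ n (0, 1) + n (1, 1) + n (2, 1) = β 1 ∧
      n (0, 2) + n (1, 2) + n (2, 2) = β 2 ∧
      n (0, 0) + n (1, 2) + n (2, 1) = γ 0 ∧ n (0, 2) + n (1, 1) + n (2, 0) = γ 1 ∧
      n (0, 1) + n (1, 0) + n (2, 2) = γ 2 := by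
  simp only [HasMargins, ZMod.forall_three, ZMod.sum_three, and_assoc]
  exact Iff.rfl

section Three

variable {α β γ : ZMod 3 → ℕ} {A : ℤ} {n : ZMod 3 × ZMod 3 → ℕ}

def solutionTriangle (α β γ : ZMod 3 → ℕ) (A : ℤ) : Set (ℤ × ℤ) :=
  triangle (max 0 (max (A - β 0 + γ 1) (2 * A + α 1 - β 0 + γ 1 - γ 0)))
    (max (-A) (max 0 (A + α 1 - β 0 - β 2 + γ 1)))
    (min (A + α 1 - β 0 + γ 1) (min ((α 0 : ℤ) - A) (γ 1 : ℤ)))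

theorem mem_solutionTriangle_iff {u v : ℤ} :
    (u, v) ∈ solutionTriangle α β γ A ↔
      (0 ≤ u ∧ A - β 0 + γ 1 ≤ u ∧ 2 * A + α 1 - β 0 + γ 1 - γ 0 ≤ u) ∧
      (-A ≤ v ∧ 0 ≤ v ∧ A + α 1 - β 0 - β 2 + γ 1 ≤ v) ∧
      (u + v ≤ A + α 1 - β 0 + γ 1 ∧ u + v ≤ α 0 - A ∧ u + v ≤ γ 1) := by
  simp only [solutionTriangle, triangle, Set.mem_ofPred_eq, max_le_iff, le_min_iff]

-- The general solution of the nine margin equations, with `n (0, 2) = u` and `n (1, 1) = v`.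
def tableOfPair (α β γ : ZMod 3 → ℕ) (A u v : ℤ) : ZMod 3 × ZMod 3 → ℕ := fun w =>
  (![![v + A, α 0 - A - u - v, u],
     ![u - A + β 0 - γ 1, v, A + α 1 - β 0 + γ 1 - u - v],
     ![γ 1 - u - v, u - 2 * A - α 1 + β 0 - γ 1 + γ 0, v - A - α 1 + β 0 + β 2 - γ 1]]
    w.1 w.2).toNat

theorem natCast_tableOfPair {u v : ℤ} (hp : (u, v) ∈ solutionTriangle α β γ A) :
    let n := tableOfPair α β γ A u v
    (n (0, 0) : ℤ) = v + A ∧ (n (0, 1) : ℤ) = α 0 - A - u - v ∧ (n (0, 2) : ℤ) = u ∧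
    (n (1, 0) : ℤ) = u - A + β 0 - γ 1 ∧ (n (1, 1) : ℤ) = v ∧
    (n (1, 2) : ℤ) = A + α 1 - β 0 + γ 1 - u - v ∧ (n (2, 0) : ℤ) = γ 1 - u - v ∧
    (n (2, 1) : ℤ) = u - 2 * A - α 1 + β 0 - γ 1 + γ 0 ∧
    (n (2, 2) : ℤ) = v - A - α 1 + β 0 + β 2 - γ 1 := by
  rw [mem_solutionTriangle_iff] at hp
  -- The double `symm` makes `Int.toNat_of_nonneg` take its argument from the right-hand side.
  refine ⟨?_, ?_, ?_, ?_, ?_, ?_, ?_, ?_, ?_⟩ <;>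
    exact Eq.symm (Int.toNat_of_nonneg (by omega)).symm

variable (hA : 3 * A = ((α 0 : ℤ) + β 0 + γ 0) - ((α 1 : ℤ) + β 1 + γ 1))
include hA

theorem mem_solutionTriangle_of_hasMargins (hn : HasMargins α β γ n) :
    ((n (0, 2) : ℤ), (n (1, 1) : ℤ)) ∈ solutionTriangle α β γ A := by
  rw [hasMargins_three_iff] at hn
  rw [mem_solutionTriangle_iff]
  omega

theorem tableOfPair_eq (hn : HasMargins α β γ n) :
    tableOfPair α β γ A (n (0, 2)) (n (1, 1)) = n := by
  obtain ⟨e00, e01, e02, e10, e11, e12, e20, e21, e22⟩ :=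
    natCast_tableOfPair (mem_solutionTriangle_of_hasMargins hA hn)
  rw [hasMargins_three_iff] at hn
  ext w
  revert w
  simp only [Prod.forall, ZMod.forall_three]
  omega

theorem hasMargins_tableOfPair (hαβ : α 0 + α 1 + α 2 = β 0 + β 1 + β 2)
    (hαγ : α 0 + α 1 + α 2 = γ 0 + γ 1 + γ 2) {u v : ℤ}
    (hp : (u, v) ∈ solutionTriangle α β γ A) :
    HasMargins α β γ (tableOfPair α β γ A u v) := by
  obtain ⟨e00, e01, e02, e10, e11, e12, e20, e21, e22⟩ := natCast_tableOfPair hp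
  rw [hasMargins_three_iff]
  omega

def hasMarginsEquivSolutionTriangle (hαβ : α 0 + α 1 + α 2 = β 0 + β 1 + β 2)
    (hαγ : α 0 + α 1 + α 2 = γ 0 + γ 1 + γ 2) :
    {n // HasMargins α β γ n} ≃ solutionTriangle α β γ A where
  toFun n := ⟨_, mem_solutionTriangle_of_hasMargins hA n.2⟩
  invFun p := ⟨_, hasMargins_tableOfPair hA hαβ hαγ p.2⟩
  left_inv n := Subtype.ext (tableOfPair_eq hA n.2)
  right_inv p := by
    obtain ⟨-, -, e02, -, e11, -⟩ := natCast_tableOfPair p.2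
    exact Subtype.ext (Prod.ext e02 e11)

end Three

theorem not_hasMargins_of_not_dvd {α β γ : ZMod 3 → ℕ} {n : ZMod 3 × ZMod 3 → ℕ}
    (h : ¬ (3 : ℤ) ∣ ((α 0 : ℤ) + β 0 + γ 0) - ((α 1 : ℤ) + β 1 + γ 1)) :
    ¬ HasMargins α β γ n := by
  rw [hasMargins_three_iff]
  omega

end PermOrbitCount

open PermOrbitCount in
theorem typeA_rank3_orbit_count_general (k : ℕ)
    (a b c : Fin k → ZMod 3)
    (α0 α1 α2 β0 β1 β2 γ0 γ1 γ2 : ℕ)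
    (ha0 : cnt a 0 = α0) (ha1 : cnt a 1 = α1) (ha2 : cnt a 2 = α2)
    (hb0 : cnt b 0 = β0) (hb1 : cnt b 1 = β1) (hb2 : cnt b 2 = β2)
    (hc0 : cnt c 0 = γ0) (hc1 : cnt c 1 = γ1) (hc2 : cnt c 2 = γ2)
    (hα : α0 + α1 + α2 = k) (hβ : β0 + β1 + β2 = k) (hγ : γ0 + γ1 + γ2 = k) :
    (∀ A : ℤ, 3 * A = ((α0 : ℤ) + β0 + γ0) - ((α1 : ℤ) + β1 + γ1) →
      ∀ C D E : ℤ,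
        C = max 0 (max (A - β0 + γ1) (2 * A + α1 - β0 + γ1 - γ0)) →
        D = max (-A) (max 0 (A + α1 - β0 - β2 + γ1)) →
        E = min (A + α1 - β0 + γ1) (min ((α0 : ℤ) - A) (γ1 : ℤ)) →
        ((D ≤ E - C →
            (Morbits 3 k a b c : ℤ) = (E - D - C + 1) * (E - D - C + 2) / 2 ∧
            Morbits 3 k a b c = Nat.choose (E - D - C + 2).toNat 2) ∧
         (E - C < D → Morbits 3 k a b c = 0))) ∧
    (¬ (3 : ℤ) ∣ (((α0 : ℤ) + β0 + γ0) - ((α1 : ℤ) + β1 + γ1)) →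
      Morbits 3 k a b c = 0) := by
  subst ha0 ha1 ha2 hb0 hb1 hb2 hc0 hc1 hc2
  rw [Morbits_eq_card_hasMargins]
  refine ⟨fun A hA C D E hC hD hE => ?_, fun hA => ?_⟩
  · rw [Nat.card_congr (hasMarginsEquivSolutionTriangle hA (by omega) (by omega)),
      solutionTriangle, ← hC, ← hD, ← hE, card_triangle, sub_right_comm E C D]
    refine ⟨fun h => ⟨?_, rfl⟩, fun h => Nat.choose_eq_zero_of_lt (by omega)⟩
    rw [Int.natCast_choose_two_toNat (by omega)]
    ring_nf
  · have : IsEmpty {n // HasMargins (cnt a) (cnt b) (cnt c) n} :=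
      ⟨fun n => not_hasMargins_of_not_dvd hA n.2⟩
    exact Nat.card_of_isEmpty

theorem typeA_rank3_orbit_count (k : ℕ) (hk : 1 ≤ k)
    (a b c : Fin k → ZMod 3)
    (α0 α1 α2 β0 β1 β2 γ0 γ1 γ2 : ℕ)
    (ha0 : cnt a 0 = α0) (ha1 : cnt a 1 = α1) (ha2 : cnt a 2 = α2)
    (hb0 : cnt b 0 = β0) (hb1 : cnt b 1 = β1) (hb2 : cnt b 2 = β2)
    (hc0 : cnt c 0 = γ0) (hc1 : cnt c 1 = γ1) (hc2 : cnt c 2 = γ2)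
    (hα : α0 + α1 + α2 = k) (hβ : β0 + β1 + β2 = k) (hγ : γ0 + γ1 + γ2 = k) :
    (∀ A : ℤ, 3 * A = ((α0 : ℤ) + β0 + γ0) - ((α1 : ℤ) + β1 + γ1) →
      ∀ C D E : ℤ,
        C = max 0 (max (A - β0 + γ1) (2 * A + α1 - β0 + γ1 - γ0)) →
        D = max (-A) (max 0 (A + α1 - β0 - β2 + γ1)) →
        E = min (A + α1 - β0 + γ1) (min ((α0 : ℤ) - A) (γ1 : ℤ)) →
        ((D ≤ E - C →
            (Morbits 3 k a b c : ℤ) = (E - D - C + 1) * (E - D - C + 2) / 2 ∧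
            Morbits 3 k a b c = Nat.choose (E - D - C + 2).toNat 2) ∧
         (E - C < D → Morbits 3 k a b c = 0))) ∧
    (¬ (3 : ℤ) ∣ (((α0 : ℤ) + β0 + γ0) - ((α1 : ℤ) + β1 + γ1)) →
      Morbits 3 k a b c = 0) :=
  typeA_rank3_orbit_count_general k a b c α0 α1 α2 β0 β1 β2 γ0 γ1 γ2 ha0 ha1 ha2 hb0 hb1 hb2 hc0 hc1
    hc2 hα hβ hγ
end

section
/- Fix integers N ≥ 2 and k ≥ 1 and let G = (ZMod N)^k with S_k acting by permuting coordinates. Let a, b, c ∈ G be such that a has exactly α_j coordinates equal to j, b has exactly β_j, and c has exactly γ_j for 0 ≤ j ≤ N−1, where each family of nonnegative integers sums to k. Then M([a],[b],[c]) equals the number of N×N matrices K = [k_{ij}] (indices 0 ≤ i, j ≤ N−1) with nonnegative integer entries satisfying: (row sums) ∑_{j=0}^{N−1} k_{ij} = γ_i for each i; (column sums) ∑_{i=0}^{N−1} k_{ij} = α_j for each j; and (wrapped antidiagonal sums) ∑_{i=0}^{N−1} k_{i, (l−i) mod N} = β_{(N−l) mod N} for each l with 1 ≤ l ≤ N. 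-/
section aux
variable {X : Type*} [DecidableEq X] {k : ℕ}

/-- Generalized coordinate count. -/
def cntg (u : Fin k → X) (x : X) : ℕ := (Finset.univ.filter fun i => u i = x).card

lemma cntg_eq_card (u : Fin k → X) (x : X) :
    cntg u x = Fintype.card {i // u i = x} := (Fintype.card_subtype _).symm

lemma cntg_comp_perm (u : Fin k → X) (σ : Equiv.Perm (Fin k)) (x : X) :
    cntg (fun i => u (σ i)) x = cntg u x := by
  rw [cntg_eq_card, cntg_eq_card]
  exact Fintype.card_congr (σ.subtypeEquiv fun i => Iff.rfl)

lemma exists_perm_of_cntg_eq (u v : Fin k → X) (h : ∀ x, cntg u x = cntg v x) :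
    ∃ σ : Equiv.Perm (Fin k), ∀ i, v i = u (σ i) := by
  have e : ∀ x, {i // u i = x} ≃ {i // v i = x} := fun x =>
    Fintype.equivOfCardEq (by rw [← cntg_eq_card, ← cntg_eq_card]; exact h x)
  refine ⟨(Equiv.ofFiberEquiv e).symm, fun i => ?_⟩
  have h2 := Equiv.ofFiberEquiv_map e ((Equiv.ofFiberEquiv e).symm i)
  rwa [Equiv.apply_symm_apply] at h2

/-- fiber of Sigma.fst -/
def sigmaFstFiber {Y : Type*} (β : Y → Type*) (x : Y) :
    {s : Σ y, β y // s.1 = x} ≃ β x where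
  toFun s := cast (congrArg β s.2) s.1.2
  invFun b := ⟨⟨x, b⟩, rfl⟩
  left_inv s := by obtain ⟨⟨y, b⟩, h⟩ := s; subst h; rfl
  right_inv b := rfl

lemma exists_fun_cntg [Fintype X] (K : X → ℕ) (h : ∑ x, K x = k) :
    ∃ f : Fin k → X, ∀ x, cntg f x = K x := by
  have hcard : Fintype.card (Σ x : X, Fin (K x)) = Fintype.card (Fin k) := by
    simp [Fintype.card_sigma, h]
  obtain ⟨e⟩ := Fintype.card_eq.mp hcard
  refine ⟨fun i => (e.symm i).1, fun x => ?_⟩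
  rw [cntg_eq_card]
  have eq1 : {i // (e.symm i).1 = x} ≃ {s : Σ y : X, Fin (K y) // s.1 = x} :=
    Equiv.subtypeEquiv e.symm fun i => Iff.rfl
  rw [Fintype.card_congr (eq1.trans (sigmaFstFiber _ x)), Fintype.card_fin]

end aux

section sums
variable {N k : ℕ} [NeZero N]

lemma sum_cntg_fst (z x : Fin k → ZMod N) (i : ZMod N) :
    ∑ j : ZMod N, cntg (fun p => (z p, x p)) (i, j) = cntg z i := by
  unfold cntg
  rw [Finset.card_eq_sum_card_fiberwise (f := x) (t := Finset.univ) (fun p _ => Finset.mem_univ _)]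
  refine Finset.sum_congr rfl fun j _ => ?_
  rw [Finset.filter_filter]
  congr 1; ext p; simp [Prod.ext_iff, and_comm]

lemma sum_cntg_snd (z x : Fin k → ZMod N) (j : ZMod N) :
    ∑ i : ZMod N, cntg (fun p => (z p, x p)) (i, j) = cntg x j := by
  unfold cntg
  rw [Finset.card_eq_sum_card_fiberwise (f := z) (t := Finset.univ) (fun p _ => Finset.mem_univ _)]
  refine Finset.sum_congr rfl fun i _ => ?_
  rw [Finset.filter_filter]
  congr 1; ext p; simp [Prod.ext_iff, and_comm]

lemma sum_cntg_antidiag (z x : Fin k → ZMod N) (l : ZMod N) :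
    ∑ i : ZMod N, cntg (fun p => (z p, x p)) (i, l - i)
      = cntg (fun p => -x p - z p) (-l) := by
  unfold cntg
  rw [Finset.card_eq_sum_card_fiberwise (f := z) (t := Finset.univ) (fun p _ => Finset.mem_univ _)]
  refine Finset.sum_congr rfl fun i _ => ?_
  rw [Finset.filter_filter]
  congr 1; ext p
  simp only [Finset.mem_filter, Finset.mem_univ, true_and, Prod.ext_iff]
  constructor
  · rintro ⟨h1, h2⟩
    exact ⟨by linear_combination -h2 - h1, h1⟩
  · rintro ⟨h1, h2⟩
    exact ⟨h2, by linear_combination -h1 - h2⟩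

lemma cntg_of_orbit {a x : Fin k → ZMod N} (h : x ∈ permOrbit a) (j : ZMod N) :
    cntg x j = cntg a j := by
  obtain ⟨σ, rfl⟩ := h
  exact cntg_comp_perm a σ j

lemma y_eq {t : (Fin k → ZMod N) × (Fin k → ZMod N) × (Fin k → ZMod N)}
    (h : t.1 + t.2.1 + t.2.2 = 0) (p : Fin k) :
    t.2.1 p = -t.1 p - t.2.2 p := by
  have := congrFun h p
  simp only [Pi.add_apply, Pi.zero_apply] at this
  linear_combination this

end sums

theorem typeA_orbit_count_eq_matrix_count (N k : ℕ) [NeZero N] (hN : 2 ≤ N) (hk : 1 ≤ k)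
    (a b c : Fin k → ZMod N) (α β γ : ZMod N → ℕ)
    (ha : ∀ j : ZMod N, cnt a j = α j)
    (hb : ∀ j : ZMod N, cnt b j = β j)
    (hc : ∀ j : ZMod N, cnt c j = γ j)
    (hα : ∑ j : ZMod N, α j = k) (hβ : ∑ j : ZMod N, β j = k)
    (hγ : ∑ j : ZMod N, γ j = k) :
    Morbits N k a b c =
      Nat.card {K : ZMod N → ZMod N → ℕ //
        (∀ i : ZMod N, ∑ j : ZMod N, K i j = γ i) ∧
        (∀ j : ZMod N, ∑ i : ZMod N, K i j = α j) ∧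
        (∀ l : ZMod N, ∑ i : ZMod N, K i (l - i) = β (-l))} := by
  have ha' : ∀ j : ZMod N, cntg a j = α j := ha
  have hb' : ∀ j : ZMod N, cntg b j = β j := hb
  have hc' : ∀ j : ZMod N, cntg c j = γ j := hc
  -- the count matrix of a triple
  set mat : TripleSet N k a b c → ZMod N → ZMod N → ℕ :=
    fun t i j => cntg (fun p => (t.1.2.2 p, t.1.1 p)) (i, j) with hmat
  have hmatprop : ∀ t : TripleSet N k a b c,
      (∀ i : ZMod N, ∑ j : ZMod N, mat t i j = γ i) ∧
      (∀ j : ZMod N, ∑ i : ZMod N, mat t i j = α j) ∧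
      (∀ l : ZMod N, ∑ i : ZMod N, mat t i (l - i) = β (-l)) := by
    rintro ⟨⟨x, y, z⟩, hx, hy, hz, hsum⟩
    refine ⟨fun i => ?_, fun j => ?_, fun l => ?_⟩
    · rw [show (∑ j : ZMod N, mat ⟨(x,y,z),hx,hy,hz,hsum⟩ i j) =
          ∑ j : ZMod N, cntg (fun p => (z p, x p)) (i, j) from rfl,
        sum_cntg_fst, cntg_of_orbit hz, hc']
    · rw [show (∑ i : ZMod N, mat ⟨(x,y,z),hx,hy,hz,hsum⟩ i j) =
          ∑ i : ZMod N, cntg (fun p => (z p, x p)) (i, j) from rfl,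
        sum_cntg_snd, cntg_of_orbit hx, ha']
    · rw [show (∑ i : ZMod N, mat ⟨(x,y,z),hx,hy,hz,hsum⟩ i (l - i)) =
          ∑ i : ZMod N, cntg (fun p => (z p, x p)) (i, l - i) from rfl,
        sum_cntg_antidiag]
      have hy' : (fun p => -x p - z p) = y := by
        funext p; exact (y_eq hsum p).symm
      rw [hy', cntg_of_orbit hy, hb']
  -- the map on the quotient
  set r : TripleSet N k a b c → TripleSet N k a b c → Prop :=
    fun t t' => ∃ σ : Equiv.Perm (Fin k),
      (∀ i, t'.1.1 i = t.1.1 (σ i)) ∧ (∀ i, t'.1.2.1 i = t.1.2.1 (σ i)) ∧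
      (∀ i, t'.1.2.2 i = t.1.2.2 (σ i)) with hr
  have hlift : ∀ t t' : TripleSet N k a b c, r t t' → mat t = mat t' := by
    rintro t t' ⟨σ, h1, h2, h3⟩
    funext i j
    have : (fun p => (t'.1.2.2 p, t'.1.1 p)) =
        fun p => (fun q => (t.1.2.2 q, t.1.1 q)) (σ p) := by
      funext p; simp [h1 p, h3 p]
    rw [hmat]
    show cntg (fun p => (t.1.2.2 p, t.1.1 p)) (i, j)
      = cntg (fun p => (t'.1.2.2 p, t'.1.1 p)) (i, j)
    rw [this]
    exact (cntg_comp_perm (fun q => (t.1.2.2 q, t.1.1 q)) σ (i, j)).symm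
  set F : Quot r → {K : ZMod N → ZMod N → ℕ //
        (∀ i : ZMod N, ∑ j : ZMod N, K i j = γ i) ∧
        (∀ j : ZMod N, ∑ i : ZMod N, K i j = α j) ∧
        (∀ l : ZMod N, ∑ i : ZMod N, K i (l - i) = β (-l))} :=
    Quot.lift (fun t => ⟨mat t, hmatprop t⟩)
      (fun t t' h => Subtype.ext (hlift t t' h)) with hF
  have hbij : Function.Bijective F := by
    constructor
    · -- injective
      rintro q q'
      induction q using Quot.ind with | _ t =>
      induction q' using Quot.ind with | _ t' =>
      intro h
      have hmm : mat t = mat t' := by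
        rw [hF] at h
        exact congrArg Subtype.val h
      apply Quot.sound
      have hcnt : ∀ w : ZMod N × ZMod N,
          cntg (fun p => (t.1.2.2 p, t.1.1 p)) w
            = cntg (fun p => (t'.1.2.2 p, t'.1.1 p)) w := by
        rintro ⟨i, j⟩
        exact congrFun (congrFun hmm i) j
      obtain ⟨σ, hσ⟩ := exists_perm_of_cntg_eq _ _ hcnt
      have hcomp : ∀ i, t'.1.2.2 i = t.1.2.2 (σ i) ∧ t'.1.1 i = t.1.1 (σ i) := by
        intro i
        have h' := hσ i
        simpa [Prod.mk.injEq] using h'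
      refine ⟨σ, fun i => (hcomp i).2, fun i => ?_, fun i => (hcomp i).1⟩
      rw [y_eq t'.2.2.2.2 i, y_eq t.2.2.2.2 (σ i), (hcomp i).1, (hcomp i).2]
    · -- surjective
      rintro ⟨K, h1, h2, h3⟩
      have htot : ∑ w : ZMod N × ZMod N, K w.1 w.2 = k := by
        rw [Fintype.sum_prod_type]
        simp only [h1]
        exact hγ
      obtain ⟨f, hf⟩ := exists_fun_cntg (fun w : ZMod N × ZMod N => K w.1 w.2) htot
      set z : Fin k → ZMod N := fun p => (f p).1 with hzdef
      set x : Fin k → ZMod N := fun p => (f p).2 with hxdef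
      set y : Fin k → ZMod N := fun p => -x p - z p with hydef
      have hpair : (fun p => (z p, x p)) = f := by funext p; rfl
      have hcx : ∀ j, cntg x j = cntg a j := by
        intro j
        rw [← sum_cntg_snd z x j, hpair]
        simp only [hf]
        rw [h2 j, ← ha' j]
      have hcz : ∀ i, cntg z i = cntg c i := by
        intro i
        rw [← sum_cntg_fst z x i, hpair]
        simp only [hf]
        rw [h1 i, ← hc' i]
      have hcy : ∀ m, cntg y m = cntg b m := by
        intro m
        have := sum_cntg_antidiag z x (-m)
        rw [neg_neg, hpair] at this
        rw [hydef, ← this]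
        simp only [hf]
        rw [h3 (-m), neg_neg, ← hb' m]
      have hx : x ∈ permOrbit a := by
        obtain ⟨σ, hσ⟩ := exists_perm_of_cntg_eq a x (fun w => (hcx w).symm)
        exact ⟨σ, funext hσ⟩
      have hyo : y ∈ permOrbit b := by
        obtain ⟨σ, hσ⟩ := exists_perm_of_cntg_eq b y (fun w => (hcy w).symm)
        exact ⟨σ, funext hσ⟩
      have hzo : z ∈ permOrbit c := by
        obtain ⟨σ, hσ⟩ := exists_perm_of_cntg_eq c z (fun w => (hcz w).symm)
        exact ⟨σ, funext hσ⟩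
      have hsum : x + y + z = 0 := by
        funext p
        simp only [Pi.add_apply, Pi.zero_apply, hydef]
        ring
      refine ⟨Quot.mk r ⟨(x, y, z), hx, hyo, hzo, hsum⟩, ?_⟩
      rw [hF]
      apply Subtype.ext
      funext i j
      show cntg (fun p => (z p, x p)) (i, j) = K i j
      rw [hpair]
      exact hf (i, j)
  show Nat.card (Quot r) = _
  exact Nat.card_eq_of_bijective F hbij
end

section
/- Fix an integer k ≥ 1 and let G = (ZMod 2)^k. For 0 ≤ i ≤ k let P_i = {g ∈ G : exactly i coordinates of g equal 1}. Then for all 0 ≤ i, j, l ≤ k, there exist x ∈ P_i and y ∈ P_j with x + y ∈ P_l if and only if |i − j| ≤ l ≤ i + j, i + j + l is even, and i + j + l ≤ 2k; equivalently, if and only if the triple (i+1, j+1, l+1) is (k+2)-admissible. (This is the combinatorial content of the statement that the group ℤ₂^k, with the partition P₀,…,P_k, covers the level-k fusion algebra of the affine Lie algebra A₁⁽¹⁾.) -/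
open Finset

/-- For an integer `p ≥ 2`, a triple of integers `(m, m', m'')` is `p`-admissible when
`0 < m, m', m'' < p`, the sum `m + m' + m'' < 2p` is odd, and the strict triangle
inequalities hold. -/
def PAdmissible (p m m' m'' : ℤ) : Prop :=
  (0 < m ∧ m < p) ∧ (0 < m' ∧ m' < p) ∧ (0 < m'' ∧ m'' < p) ∧
  m + m' + m'' < 2 * p ∧ Odd (m + m' + m'') ∧
  m < m' + m'' ∧ m' < m + m'' ∧ m'' < m + m'

lemma zmod2_add : ∀ a b : ZMod 2, a + b = 1 ↔ ¬(a = 1 ↔ b = 1) := by decide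

lemma card_filter_val (k : ℕ) (p : ℕ → Prop) [DecidablePred p] :
    (Finset.univ.filter fun i : Fin k => p i.val).card
      = ((Finset.range k).filter p).card := by
  apply Finset.card_bij (fun a _ => a.val)
  · intro a ha; simp only [mem_filter, mem_range, mem_univ, true_and] at ha ⊢
    exact ⟨a.isLt, ha⟩
  · intro a _ b _ h; exact Fin.val_injective h
  · intro b hb; simp only [mem_filter, mem_range, mem_univ, true_and] at hb
    exact ⟨⟨b, hb.1⟩, by simp [hb.2], rfl⟩

lemma aux_core (k i j l : ℕ) :
    (∃ x y : Fin k → ZMod 2, cnt x 1 = i ∧ cnt y 1 = j ∧ cnt (x + y) 1 = l) ↔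
      (i ≤ j + l ∧ j ≤ i + l ∧ l ≤ i + j ∧ (i + j + l) % 2 = 0 ∧ i + j + l ≤ 2 * k) := by
  constructor
  · rintro ⟨x, y, hx, hy, hxy⟩
    set A := Finset.univ.filter (fun i' => x i' = 1) with hA
    set B := Finset.univ.filter (fun i' => y i' = 1) with hB
    have hfe : (Finset.univ.filter fun i' => (x + y) i' = 1) = (A \ B) ∪ (B \ A) := by
      ext a
      simp only [hA, hB, mem_filter, mem_union, mem_sdiff, mem_univ, true_and,
        Pi.add_apply, zmod2_add]
      tauto
    have c1 : (A ∩ B).card + (A \ B).card = A.card := Finset.card_inter_add_card_sdiff A B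
    have c2 : (B ∩ A).card + (B \ A).card = B.card := Finset.card_inter_add_card_sdiff B A
    have c3 : (B ∩ A).card = (A ∩ B).card := by rw [Finset.inter_comm]
    have c4 : (A ∪ B).card + (A ∩ B).card = A.card + B.card :=
      Finset.card_union_add_card_inter A B
    have c5 : (A ∪ B).card ≤ k := by
      have := Finset.card_le_univ (A ∪ B)
      simpa using this
    have hl' : (A \ B).card + (B \ A).card = l := by
      rw [← hxy]
      unfold cnt
      rw [hfe, Finset.card_union_of_disjoint (disjoint_sdiff_sdiff)]
    have hi' : A.card = i := hx
    have hj' : B.card = j := hy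
    omega
  · rintro ⟨h1, h2, h3, h4, h5⟩
    obtain ⟨u, t, v, hu, ht, hv, hk'⟩ :
        ∃ u t v : ℕ, i = u + t ∧ j = t + v ∧ l = u + v ∧ u + t + v ≤ k := by
      refine ⟨(i + l - j) / 2, (i + j - l) / 2, (j + l - i) / 2, by omega, by omega,
        by omega, by omega⟩
    refine ⟨fun i' => if i'.val < u + t then 1 else 0,
      fun i' => if u ≤ i'.val ∧ i'.val < u + t + v then 1 else 0, ?_, ?_, ?_⟩
    · have hp : ∀ i' : Fin k,
          ((if i'.val < u + t then (1 : ZMod 2) else 0) = 1) ↔ i'.val < u + t := by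
        intro i'; split_ifs with h <;> simp [h]
      unfold cnt
      simp only [hp]
      rw [card_filter_val k (fun n => n < u + t)]
      have : (Finset.range k).filter (fun n => n < u + t) = Finset.range (u + t) := by
        ext n; simp only [mem_filter, mem_range]; omega
      rw [this, Finset.card_range, hu]
    · have hp : ∀ i' : Fin k,
          ((if u ≤ i'.val ∧ i'.val < u + t + v then (1 : ZMod 2) else 0) = 1) ↔
            (u ≤ i'.val ∧ i'.val < u + t + v) := by
        intro i'; split_ifs with h <;> simp [h]
      unfold cnt
      simp only [hp]
      rw [card_filter_val k (fun n => u ≤ n ∧ n < u + t + v)]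
      have : (Finset.range k).filter (fun n => u ≤ n ∧ n < u + t + v)
          = Finset.Ico u (u + t + v) := by
        ext n; simp only [mem_filter, mem_range, mem_Ico]; omega
      rw [this, Nat.card_Ico]
      omega
    · have hp : ∀ i' : Fin k,
          (((fun i' : Fin k => if i'.val < u + t then (1 : ZMod 2) else 0) +
            (fun i' : Fin k => if u ≤ i'.val ∧ i'.val < u + t + v then (1 : ZMod 2) else 0)) i' = 1)
          ↔ (i'.val < u ∨ (u + t ≤ i'.val ∧ i'.val < u + t + v)) := by
        intro i'
        simp only [Pi.add_apply, zmod2_add]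
        split_ifs with h1' h2' h2' <;> simp <;> omega
      unfold cnt
      simp only [hp]
      rw [card_filter_val k (fun n => n < u ∨ (u + t ≤ n ∧ n < u + t + v))]
      have : (Finset.range k).filter (fun n => n < u ∨ (u + t ≤ n ∧ n < u + t + v))
          = Finset.range u ∪ Finset.Ico (u + t) (u + t + v) := by
        ext n; simp only [mem_filter, mem_range, mem_union, mem_Ico]; omega
      rw [this, Finset.card_union_of_disjoint, Finset.card_range, Nat.card_Ico]
      · omega
      · simp only [Finset.disjoint_left, mem_range, mem_Ico]
        intro n hn; omega

theorem Z2k_partition_covers_A1_fusion (k : ℕ) (hk : 1 ≤ k)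
    (i j l : ℕ) (hi : i ≤ k) (hj : j ≤ k) (hl : l ≤ k) :
    ((∃ x y : Fin k → ZMod 2, cnt x 1 = i ∧ cnt y 1 = j ∧ cnt (x + y) 1 = l) ↔
      (|(i : ℤ) - (j : ℤ)| ≤ (l : ℤ) ∧ (l : ℤ) ≤ (i : ℤ) + (j : ℤ) ∧
        Even (i + j + l) ∧ i + j + l ≤ 2 * k)) ∧
    ((∃ x y : Fin k → ZMod 2, cnt x 1 = i ∧ cnt y 1 = j ∧ cnt (x + y) 1 = l) ↔
      PAdmissible ((k : ℤ) + 2) ((i : ℤ) + 1) ((j : ℤ) + 1) ((l : ℤ) + 1)) := by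
  rw [aux_core k i j l]
  constructor
  · constructor
    · rintro ⟨h1, h2, h3, h4, h5⟩
      refine ⟨?_, by omega, Nat.even_iff.mpr h4, by omega⟩
      rw [abs_le]; omega
    · rintro ⟨h1, h2, h3, h4⟩
      rw [abs_le] at h1
      have := Nat.even_iff.mp h3
      omega
  · unfold PAdmissible
    rw [Int.odd_iff]
    omega
end

section
/- Fix an integer k ≥ 1. For 0 ≤ i, j, l ≤ k define N(i,j,l) ∈ {0,1} by N(i,j,l) = 1 if and only if |i − j| ≤ l ≤ i + j, i + j + l is even, and i + j + l ≤ 2k. Then these structure constants are associative: for all 0 ≤ i, j, m, n ≤ k, ∑_{l=0}^{k} N(i,j,l)·N(l,m,n) = ∑_{l=0}^{k} N(j,m,l)·N(i,l,n). -/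
/-- The level-`k` fusion coefficient of affine `A₁⁽¹⁾`: `N(i,j,l) = 1` iff
`|i − j| ≤ l ≤ i + j`, `i + j + l` is even, and `i + j + l ≤ 2k`. -/
def fusA1 (k i j l : ℕ) : ℕ :=
  if |(i : ℤ) - (j : ℤ)| ≤ (l : ℤ) ∧ (l : ℤ) ≤ (i : ℤ) + (j : ℤ) ∧
      Even (i + j + l) ∧ i + j + l ≤ 2 * k then 1 else 0

lemma fusA1_mul (k a b c d e f : ℕ) :
    fusA1 k a b c * fusA1 k d e f =
    if (|(a : ℤ) - b| ≤ (c : ℤ) ∧ (c : ℤ) ≤ (a : ℤ) + b ∧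
        (a + b + c) % 2 = 0 ∧ a + b + c ≤ 2 * k) ∧
       (|(d : ℤ) - e| ≤ (f : ℤ) ∧ (f : ℤ) ≤ (d : ℤ) + e ∧
        (d + e + f) % 2 = 0 ∧ d + e + f ≤ 2 * k) then 1 else 0 := by
  unfold fusA1
  simp only [Nat.even_iff]
  split_ifs <;> tauto

set_option maxHeartbeats 1000000 in
theorem A1_fusion_coefficients_associative (k : ℕ) (hk : 1 ≤ k)
    (i j m n : ℕ) (hi : i ≤ k) (hj : j ≤ k) (hm : m ≤ k) (hn : n ≤ k) :
    ∑ l ∈ Finset.range (k + 1), fusA1 k i j l * fusA1 k l m n =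
    ∑ l ∈ Finset.range (k + 1), fusA1 k j m l * fusA1 k i l n := by
  simp only [fusA1_mul]
  rw [Finset.sum_boole, Finset.sum_boole, Nat.cast_id, Nat.cast_id]
  obtain ⟨L1, e1a, e1b, e1c, e1d, e1e⟩ :
      ∃ L, i ≤ j + L ∧ j ≤ i + L ∧ m ≤ n + L ∧ n ≤ m + L ∧
        (i = j + L ∨ j = i + L ∨ m = n + L ∨ n = m + L) :=
    ⟨max (i - j + (j - i)) (m - n + (n - m)), by omega⟩
  obtain ⟨L2, e2a, e2b, e2c, e2d, e2e⟩ :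
      ∃ L, j ≤ m + L ∧ m ≤ j + L ∧ i ≤ n + L ∧ n ≤ i + L ∧
        (j = m + L ∨ m = j + L ∨ i = n + L ∨ n = i + L) :=
    ⟨max (j - m + (m - j)) (i - n + (n - i)), by omega⟩
  apply Finset.card_bij' (fun l _ => l + L2 - L1) (fun l _ => l + L1 - L2)
  all_goals
    intro l hl
    simp only [Finset.mem_filter, Finset.mem_range, abs_sub_le_iff] at hl ⊢
    omega
end
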